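/- Let n ≥ 4, let T ∈ 𝒯_n, and let θ ∈ O_NNI(T) be an NNI operation on T. Then there are precisely four distinct operations θ' ∈ O_NNI(T) such that θ'(T) = θ(T). -/

import Mathlib

/-!
Formalization framework for unrooted binary phylogenetic trees on the
leaf set `Fin n`, encoded via their split systems (Buneman's
splits-equivalence theorem: a binary phylogenetic tree is uniquely
determined by its set of splits, which is a maximal pairwise-compatible
collection of proper bipartitions of the leaf set containing all
trivial splits).  A split `A | Aᶜ` is recorded by storing both of its
sides.
-/

/-- Two sides (subsets of leaves) are compatible: the corresponding
splits can coexist in a tree. -/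
def SidesCompatible {n : ℕ} (A B : Finset (Fin n)) : Prop :=
  A ⊆ B ∨ B ⊆ A ∨ Disjoint A B ∨ A ∪ B = Finset.univ

/-- An unrooted binary phylogenetic tree on leaf set `Fin n`,
represented by the set of sides of its splits. -/
structure PhyloTree (n : ℕ) where
  sides : Finset (Finset (Fin n))
  proper : ∀ A ∈ sides, A.Nonempty ∧ A ≠ Finset.univ
  compl_mem : ∀ A ∈ sides, Aᶜ ∈ sides
  singleton_mem : ∀ x : Fin n, {x} ∈ sides
  compatible : ∀ A ∈ sides, ∀ B ∈ sides, SidesCompatible A B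
  maximal : ∀ A : Finset (Fin n), A.Nonempty → A ≠ Finset.univ →
    (∀ B ∈ sides, SidesCompatible A B) → A ∈ sides

namespace PhyloTree

variable {n : ℕ}

/-- The split system of the restricted tree `T|X`: two trees agree on
`X` (i.e. `T|X = T'|X`) iff their restricted split systems agree. -/
def restrict (T : PhyloTree n) (X : Finset (Fin n)) : Finset (Finset (Fin n)) :=
  T.sides.image (· ∩ X)

/-- `Γ(T)`: the sum of `|A| * |B|` over all non-trivial splits `A|B` of
`T` (each unordered split is stored twice in `sides`, hence the
division by two, which is exact). -/
def gamma (T : PhyloTree n) : ℕ :=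
  (∑ A ∈ T.sides.filter (fun A => 2 ≤ A.card ∧ 2 ≤ Aᶜ.card), A.card * Aᶜ.card) / 2

/-- A tree-rearrangement move: the deleted edge of `T` (recorded as the
unordered split it induces) together with the output tree. -/
abbrev Move (n : ℕ) := Sym2 (Finset (Fin n)) × PhyloTree n

/-- The set of TBR operations on `T`: delete the edge inducing the
split `A | Aᶜ` and reconnect, obtaining a distinct tree `θ.2`.  The
defining property is that deleting the corresponding edges from `T`
and from `θ.2` yields the same forest, i.e. `A|Aᶜ` is a split of both
trees and the two restrictions agree. -/
def OTBR (T : PhyloTree n) : Set (Move n) :=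
  { θ | θ.2 ≠ T ∧ ∃ A : Finset (Fin n),
      θ.1 = Sym2.mk A Aᶜ ∧ A ∈ T.sides ∧ A ∈ θ.2.sides ∧
      T.restrict A = θ.2.restrict A ∧ T.restrict Aᶜ = θ.2.restrict Aᶜ }

/-- SPR operations: TBR operations where one component `T|A` of the
bisection (the pruned subtree) is regrafted preserving its rooting,
i.e. `T|(A ∪ {x}) = θ(T)|(A ∪ {x})` for some (equivalently every) leaf
`x` of the other side. -/
def OSPR (T : PhyloTree n) : Set (Move n) :=
  { θ | θ ∈ T.OTBR ∧ ∃ A : Finset (Fin n), θ.1 = Sym2.mk A Aᶜ ∧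
      ∃ x ∈ Aᶜ, T.restrict (insert x A) = θ.2.restrict (insert x A) }

/-- The effect on sides of swapping the pendant subtrees `T|Y` and
`T|Z` (for disjoint clusters `Y`, `Z`). -/
def swapSide (Y Z A : Finset (Fin n)) : Finset (Fin n) :=
  if Y ⊆ A ∧ Disjoint Z A then (A \ Y) ∪ Z
  else if Z ⊆ A ∧ Disjoint Y A then (A \ Z) ∪ Y
  else A

/-- NNI operations: SPR operations in which the pruned subtree `T|Y` is
swapped with a pendant subtree `T|Z` for some cluster `Z ≠ Y` of `T`. -/
def ONNI (T : PhyloTree n) : Set (Move n) :=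
  { θ | θ ∈ T.OTBR ∧ ∃ Y Z : Finset (Fin n),
      θ.1 = Sym2.mk Y Yᶜ ∧
      (∃ x ∈ Yᶜ, T.restrict (insert x Y) = θ.2.restrict (insert x Y)) ∧
      Z ∈ T.sides ∧ Z ≠ Y ∧ Disjoint Y Z ∧
      θ.2.sides = T.sides.image (swapSide Y Z) }

/-- The TBR neighbourhood `N_TBR(T) = {θ(T) : θ ∈ O_TBR(T)}`. -/
def NTBR (T : PhyloTree n) : Set (PhyloTree n) := Prod.snd '' T.OTBR

/-- The SPR neighbourhood. -/
def NSPR (T : PhyloTree n) : Set (PhyloTree n) := Prod.snd '' T.OSPR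

/-- The NNI neighbourhood. -/
def NNNI (T : PhyloTree n) : Set (PhyloTree n) := Prod.snd '' T.ONNI

/-- A caterpillar: every internal vertex (equivalently, every
tripartition of the leaves into three clusters) is adjacent to a
leaf. -/
def IsCaterpillar (T : PhyloTree n) : Prop :=
  ∀ A B C : Finset (Fin n), A ∈ T.sides → B ∈ T.sides → C ∈ T.sides →
    Disjoint A B → Disjoint A C → Disjoint B C → A ∪ B ∪ C = Finset.univ →
    (A.card = 1 ∨ B.card = 1 ∨ C.card = 1)

/-- A complete (maximally balanced) tree. -/
def IsComplete (T : PhyloTree n) : Prop :=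
  ∃ k : ℕ, 3 * 2 ^ k ≤ n ∧ n < 3 * 2 ^ (k + 1) ∧
    (∃ Y ∈ T.sides, Y.card = 2 ^ (k + 1)) ∧
    ∀ Y ∈ T.sides, 2 ≤ Y.card → Y.card ≤ 2 ^ (k + 1) →
      ∃ Y₁ Y₂ : Finset (Fin n), Y₁ ∈ T.sides ∧ Y₂ ∈ T.sides ∧
        Disjoint Y₁ Y₂ ∧ Y₁ ∪ Y₂ = Y ∧
        ∃ j : ℕ, Y₁.card = 2 ^ j ∧ 2 ^ (j - 1) ≤ Y₂.card ∧ Y₂.card < 2 ^ (j + 1)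

/-- The pendant subtree on the cluster `S` is perfectly balanced:
every cluster inside `S` with at least two leaves splits into two
equal-sized child clusters. -/
def PerfOn (T : PhyloTree n) (S : Finset (Fin n)) : Prop :=
  ∀ Y ∈ T.sides, Y ⊆ S → 2 ≤ Y.card →
    ∃ Y₁ Y₂ : Finset (Fin n), Y₁ ∈ T.sides ∧ Y₂ ∈ T.sides ∧
      Disjoint Y₁ Y₂ ∧ Y₁ ∪ Y₂ = Y ∧ Y₁.card = Y₂.card

/-- A perfect tree: either `n = 2^k` and `T` is two perfectly balanced
rooted trees with `2^(k-1)` leaves joined by an edge, or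
`n = 3·2^(k-1)` and `T` is three perfectly balanced rooted trees with
`2^(k-1)` leaves attached to a common vertex. -/
def IsPerfect (T : PhyloTree n) : Prop :=
  (∃ k : ℕ, n = 2 ^ k ∧ ∃ A ∈ T.sides,
      A.card = 2 ^ (k - 1) ∧ T.PerfOn A ∧ T.PerfOn Aᶜ) ∨
  (∃ k : ℕ, n = 3 * 2 ^ (k - 1) ∧ ∃ A B C : Finset (Fin n),
      A ∈ T.sides ∧ B ∈ T.sides ∧ C ∈ T.sides ∧
      Disjoint A B ∧ Disjoint A C ∧ Disjoint B C ∧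
      A ∪ B ∪ C = Finset.univ ∧
      A.card = 2 ^ (k - 1) ∧ B.card = 2 ^ (k - 1) ∧ C.card = 2 ^ (k - 1) ∧
      T.PerfOn A ∧ T.PerfOn B ∧ T.PerfOn C)

end PhyloTree

/-!
An NNI operation acts across an internal edge: if `W, M` hang off one end and `V, N` off the
other, exchanging `W` and `V` replaces the split `W ∪ M | V ∪ N` by `M ∪ V | W ∪ N` and keeps
all other splits. When `θ` swaps the clusters `W` and `V`, the sides of `T` between `W` and `Vᶜ`
form a chain; it has an interior member `W ∪ M` because `θ(T) ≠ T`, and only one because `T`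
and `θ(T)` agree on `Wᶜ`. The four swaps `W ↔ V`, `V ↔ W`, `M ↔ N`, `N ↔ M` across this edge
all produce `θ(T)`. Conversely, an NNI operation with output `θ(T)` removes the same split,
hence acts across the same edge, and since a cluster is the union of two disjoint clusters in
at most one way, the subtree it prunes is one of `W, M, V, N`.
-/

open Finset

section SidesCompatible

variable {n : ℕ} {A B : Finset (Fin n)} {a b c d : Fin n}

theorem SidesCompatible.four_point (h : SidesCompatible A B) (ha : a ∈ A) (ha' : a ∈ B)
    (hb : b ∈ A) (hb' : b ∉ B) (hc : c ∉ A) (hc' : c ∈ B) (hd : d ∉ A) (hd' : d ∉ B) : False := by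
  rcases h with h | h | h | h
  · exact hb' (h hb)
  · exact hc (h hc')
  · exact disjoint_left.mp h ha ha'
  · exact (mem_union.mp (h.symm ▸ mem_univ d)).elim hd hd'

theorem SidesCompatible.of_four_point
    (h : ∀ a b c d, a ∈ A → a ∈ B → b ∈ A → b ∉ B → c ∉ A → c ∈ B → d ∉ A → d ∉ B → False) :
    SidesCompatible A B := by
  by_contra hAB
  simp only [SidesCompatible, not_or, not_subset, not_disjoint_iff, eq_univ_iff_forall,
    not_forall, mem_union] at hAB
  obtain ⟨⟨b, hb, hb'⟩, ⟨c, hc', hc⟩, ⟨a, ha, ha'⟩, ⟨d, hd, hd'⟩⟩ := hAB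
  exact h a b c d ha ha' hb hb' hc hc' hd hd'

theorem SidesCompatible.subset_or_subset (h : SidesCompatible A B) (ha : a ∈ A) (ha' : a ∈ B)
    (hd : d ∉ A) (hd' : d ∉ B) : A ⊆ B ∨ B ⊆ A := by
  by_contra! hAB
  obtain ⟨b, hb, hb'⟩ := not_subset.mp hAB.1
  obtain ⟨c, hc', hc⟩ := not_subset.mp hAB.2
  exact h.four_point ha ha' hb hb' hc hc' hd hd'

theorem SidesCompatible.disjoint_or_subset (h : SidesCompatible A B) (hb : b ∈ A) (hb' : b ∉ B)
    (hd : d ∉ A) (hd' : d ∉ B) : Disjoint A B ∨ B ⊆ A := by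
  by_contra! hAB
  obtain ⟨a, ha, ha'⟩ := not_disjoint_iff.mp hAB.1
  obtain ⟨c, hc', hc⟩ := not_subset.mp hAB.2
  exact h.four_point ha ha' hb hb' hc hc' hd hd'

end SidesCompatible

namespace PhyloTree

variable {n : ℕ} {T T' : PhyloTree n}
  {A B E E₁ E₂ P Q P' Q' S W M V N W' M' V' N' : Finset (Fin n)}

theorem sides_injective : Function.Injective (sides : PhyloTree n → Finset (Finset (Fin n))) := by
  rintro ⟨⟩ ⟨⟩ h
  simpa using h

theorem nonempty_of_mem (h : A ∈ T.sides) : A.Nonempty := (T.proper A h).1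

theorem ne_univ_of_mem (h : A ∈ T.sides) : A ≠ univ := (T.proper A h).2

theorem compl_mem_iff : Aᶜ ∈ T.sides ↔ A ∈ T.sides :=
  ⟨fun h => compl_compl A ▸ T.compl_mem _ h, T.compl_mem A⟩

section swapSide

theorem swapSide_of_subset (h : W ⊆ B ∧ Disjoint V B) : swapSide W V B = (B \ W) ∪ V :=
  if_pos h

theorem swapSide_of_not_subset (h₁ : ¬(W ⊆ B ∧ Disjoint V B)) (h₂ : ¬(V ⊆ B ∧ Disjoint W B)) :
    swapSide W V B = B := by
  rw [swapSide, if_neg h₁, if_neg h₂]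

theorem swapSide_self (hWV : Disjoint W V) : swapSide W V W = V := by
  simp [swapSide_of_subset ⟨subset_rfl, hWV.symm⟩]

theorem swapSide_compl_right (hWV : Disjoint W V) : swapSide W V Vᶜ = Wᶜ := by
  rw [swapSide_of_subset ⟨subset_compl_iff_disjoint_right.mpr hWV, disjoint_compl_right⟩]
  ext a
  have : a ∈ W → a ∉ V := fun h => disjoint_left.mp hWV h
  simp only [mem_union, mem_sdiff, mem_compl]
  tauto

variable (hW : W.Nonempty) (hV : V.Nonempty) (hWV : Disjoint W V)
include hW hV hWV

theorem swapSide_compl (B : Finset (Fin n)) : swapSide W V Bᶜ = (swapSide W V B)ᶜ := by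
  obtain ⟨w, hw⟩ := hW
  obtain ⟨v, hv⟩ := hV
  unfold swapSide
  split_ifs <;>
  simp only [Finset.ext_iff, subset_iff, disjoint_left, mem_compl, mem_union, mem_sdiff] at * <;>
  grind

theorem swapSide_swapSide (B : Finset (Fin n)) : swapSide W V (swapSide W V B) = B := by
  obtain ⟨w, hw⟩ := hW
  obtain ⟨v, hv⟩ := hV
  unfold swapSide
  split_ifs <;>
  simp only [Finset.ext_iff, subset_iff, disjoint_left, mem_union, mem_sdiff] at * <;>
  grind

theorem mem_image_swapSide {s : Finset (Finset (Fin n))} :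
    B ∈ s.image (swapSide W V) ↔ swapSide W V B ∈ s := by
  refine ⟨fun h => ?_, fun h => mem_image.mpr ⟨_, h, swapSide_swapSide hW hV hWV B⟩⟩
  obtain ⟨C, hC, rfl⟩ := mem_image.mp h
  rwa [swapSide_swapSide hW hV hWV]

end swapSide

theorem swapSide_mem_sides (hW : W ∈ T.sides) (hV : V ∈ T.sides) (hWV : Disjoint W V)
    (hB : B ∈ T.sides) (h₁ : W ⊆ B → Disjoint V B → B = W ∨ B = Vᶜ)
    (h₂ : W ⊆ Bᶜ → Disjoint V Bᶜ → Bᶜ = W ∨ Bᶜ = Vᶜ) : swapSide W V B ∈ T.sides := by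
  have between : ∀ C, (W ⊆ C → Disjoint V C → C = W ∨ C = Vᶜ) →
      W ⊆ C ∧ Disjoint V C → swapSide W V C ∈ T.sides := by
    rintro C hC hWC
    rcases hC hWC.1 hWC.2 with rfl | rfl
    · rwa [swapSide_self hWV]
    · rw [swapSide_compl_right hWV]
      exact T.compl_mem W hW
  by_cases hWB : W ⊆ B ∧ Disjoint V B
  · exact between B h₁ hWB
  by_cases hWBc : W ⊆ Bᶜ ∧ Disjoint V Bᶜ
  · rw [← compl_compl B, swapSide_compl (nonempty_of_mem hW) (nonempty_of_mem hV) hWV,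
      compl_mem_iff]
    exact between Bᶜ h₂ hWBc
  rwa [swapSide_of_not_subset hWB]
  rwa [le_compl_iff_disjoint_right, disjoint_compl_right_iff, and_comm] at hWBc

theorem sdiff_mem_of_covBy (hP : P ∈ T.sides) (hQ : Q ∈ T.sides) (hPQ : P ⊂ Q)
    (h : ∀ B ∈ T.sides, P ⊆ B → B ⊆ Q → B = P ∨ B = Q) : Q \ P ∈ T.sides := by
  obtain ⟨x, hxQ, hxP⟩ := exists_of_ssubset hPQ
  obtain ⟨y, hy⟩ : ∃ y, y ∉ Q := by simpa [eq_univ_iff_forall] using ne_univ_of_mem hQ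
  refine T.maximal _ ⟨x, mem_sdiff.mpr ⟨hxQ, hxP⟩⟩ (ne_of_mem_of_not_mem' (mem_univ y)
    fun h => hy (mem_sdiff.mp h).1).symm fun B hB => .of_four_point fun a b c d ha ha' hb hb'
      hc hc' hd hd' => ?_
  simp only [mem_sdiff, not_and, not_not] at ha hb hc hd
  have mem_of_union_eq_univ : Q ∪ B = univ → ∀ x, x ∉ B → x ∈ Q := fun hQB x hx =>
    (mem_union.mp (hQB ▸ mem_univ x)).resolve_right hx
  rcases T.compatible Q hQ B hB with hQB | hBQ | hQB | hQB
  · exact hb' (hQB hb.1)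
  · rcases (T.compatible B hB P hP).subset_or_subset hc' (hc (hBQ hc')) hb' hb.2 with hBP | hPB
    · exact ha.2 (hBP ha')
    · rcases h B hB hPB hBQ with rfl | rfl
      exacts [ha.2 ha', hb' hb.1]
  · exact disjoint_left.mp hQB ha.1 ha'
  · rcases (T.compatible _ (T.compl_mem B hB) P hP).subset_or_subset (mem_compl.mpr hd')
      (hd (mem_of_union_eq_univ hQB d hd')) (by simpa using ha') ha.2 with hBP | hPB
    · exact hb.2 (hBP (mem_compl.mpr hb'))
    · rcases h _ (T.compl_mem B hB) hPB fun x hx => mem_of_union_eq_univ hQB x (mem_compl.mp hx)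
        with hBc | hBc
      · exact hb.2 (hBc ▸ mem_compl.mpr hb')
      · exact mem_compl.mp (hBc ▸ ha.1) ha'

section UnionEq

variable (hP : P ∈ T.sides) (hQ : Q ∈ T.sides) (hP' : P' ∈ T.sides) (hQ' : Q' ∈ T.sides)
  (hPQ : Disjoint P Q) (hPQ' : Disjoint P' Q') (hU : P' ∪ Q' = P ∪ Q) (hne : P ∪ Q ≠ univ)
include hP hQ hP' hQ' hPQ hPQ' hU hne

theorem eq_of_subset_of_union_eq (hsub : P' ⊆ P) : P' = P := by
  by_contra hne'
  obtain ⟨p, hp, hp'⟩ := exists_of_ssubset (hsub.ssubset_of_ne hne')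
  obtain ⟨q, hq⟩ := nonempty_of_mem hQ
  obtain ⟨r, hr⟩ := nonempty_of_mem hP'
  obtain ⟨d, hd⟩ : ∃ d, d ∉ P ∪ Q := by simpa [eq_univ_iff_forall] using hne
  have hmem : ∀ x, x ∈ P' ∪ Q' ↔ x ∈ P ∪ Q := fun x => by rw [hU]
  simp only [mem_union] at hmem hd
  exact (T.compatible Q' hQ' P hP).four_point
    (((hmem p).mpr (.inl hp)).resolve_left hp') hp
    (((hmem q).mpr (.inr hq)).resolve_left fun h => disjoint_left.mp hPQ (hsub h) hq)
    (disjoint_right.mp hPQ hq) (disjoint_left.mp hPQ' hr) (hsub hr)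
    (fun h => hd ((hmem d).mp (.inr h))) (hd ∘ .inl)

theorem eq_or_eq_of_union_eq : P' = P ∨ P' = Q := by
  rcases T.compatible P' hP' P hP with h | h | h | h
  · exact .inl (eq_of_subset_of_union_eq hP hQ hP' hQ' hPQ hPQ' hU hne h)
  · exact .inl (eq_of_subset_of_union_eq hP' hQ' hP hQ hPQ' hPQ hU.symm (hU ▸ hne) h).symm
  · refine .inr (eq_of_subset_of_union_eq hQ hP hP' hQ' hPQ.symm hPQ' (hU.trans (union_comm _ _))
      (union_comm P Q ▸ hne) fun x hx => ?_)
    exact (mem_union.mp (hU ▸ mem_union_left Q' hx)).resolve_left (disjoint_left.mp h hx)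
  · refine absurd (eq_univ_of_forall fun x => ?_) hne
    rcases mem_union.mp (h ▸ mem_univ x) with hx | hx
    exacts [hU ▸ mem_union_left Q' hx, mem_union_left Q hx]

end UnionEq

theorem eq_or_eq_sdiff_of_inter_compl_eq (hW : W ∈ T.sides) (hB : B ∈ T.sides) (hWE : W ⊆ E)
    (hBE : B ∩ Wᶜ = E ∩ Wᶜ) {e v : Fin n} (he : e ∈ E) (he' : e ∉ W) (hv : v ∉ E)
    (hv' : v ∉ W) : B = E ∨ B = E \ W := by
  have hmem : ∀ a, a ∉ W → (a ∈ B ↔ a ∈ E) := fun a ha => by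
    simpa [ha] using congrArg (a ∈ ·) hBE
  rcases T.compatible B hB W hW with hBW | hWB | hBW | hBW
  · exact absurd (hBW ((hmem e he').mpr he)) he'
  · left
    ext a
    by_cases ha : a ∈ W
    exacts [iff_of_true (hWB ha) (hWE ha), hmem a ha]
  · right
    ext a
    by_cases ha : a ∈ W
    · simp [ha, disjoint_right.mp hBW ha]
    · simp [ha, hmem a ha]
  · have : v ∈ B := (mem_union.mp (hBW ▸ mem_univ v)).resolve_right hv'
    exact absurd ((hmem v hv').mp this) hv

/-- `W, M` and `V, N` are the clusters hanging off the two ends of an internal edge of `T`,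
the edge inducing the split `W ∪ M | V ∪ N`. -/
structure IsQuartet (T : PhyloTree n) (W M V N : Finset (Fin n)) : Prop where
  mem₁ : W ∈ T.sides
  mem₂ : M ∈ T.sides
  mem₃ : V ∈ T.sides
  mem₄ : N ∈ T.sides
  union₁₂_mem : W ∪ M ∈ T.sides
  compl_union₁₂ : (W ∪ M)ᶜ = V ∪ N
  disjoint₁₂ : Disjoint W M
  disjoint₃₄ : Disjoint V N

/-- The split system of the NNI neighbour of `T` that exchanges `W` and `V` across the edge
`W ∪ M | (W ∪ M)ᶜ`. -/
def nniSides (T : PhyloTree n) (W M V : Finset (Fin n)) : Finset (Finset (Fin n)) :=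
  (T.sides \ {W ∪ M, (W ∪ M)ᶜ}) ∪ {M ∪ V, (M ∪ V)ᶜ}

theorem mem_nniSides (hB : B ∈ T.sides) (h₁ : B ≠ W ∪ M) (h₂ : B ≠ (W ∪ M)ᶜ) :
    B ∈ T.nniSides W M V :=
  mem_union_left _ (mem_sdiff.mpr ⟨hB, by simpa only [mem_insert, mem_singleton, not_or]
    using ⟨h₁, h₂⟩⟩)

namespace IsQuartet

variable (h : IsQuartet T W M V N)
include h

theorem swap : IsQuartet T V N W M where
  mem₁ := h.mem₃
  mem₂ := h.mem₄
  mem₃ := h.mem₁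
  mem₄ := h.mem₂
  union₁₂_mem := h.compl_union₁₂ ▸ T.compl_mem _ h.union₁₂_mem
  compl_union₁₂ := by rw [← h.compl_union₁₂, compl_compl]
  disjoint₁₂ := h.disjoint₃₄
  disjoint₃₄ := h.disjoint₁₂

theorem flip : IsQuartet T M W N V where
  mem₁ := h.mem₂
  mem₂ := h.mem₁
  mem₃ := h.mem₄
  mem₄ := h.mem₃
  union₁₂_mem := union_comm W M ▸ h.union₁₂_mem
  compl_union₁₂ := by rw [union_comm, h.compl_union₁₂, union_comm]
  disjoint₁₂ := h.disjoint₁₂.symm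
  disjoint₃₄ := h.disjoint₃₄.symm

theorem disjoint_union : Disjoint (W ∪ M) (V ∪ N) := h.compl_union₁₂ ▸ disjoint_compl_right

theorem disjoint₁₃ : Disjoint W V := h.disjoint_union.mono subset_union_left subset_union_left

theorem disjoint₁₄ : Disjoint W N := h.disjoint_union.mono subset_union_left subset_union_right

theorem disjoint₂₃ : Disjoint M V := h.disjoint_union.mono subset_union_right subset_union_left

theorem disjoint₂₄ : Disjoint M N := h.disjoint_union.mono subset_union_right subset_union_right

theorem mem_or (a : Fin n) : a ∈ W ∨ a ∈ M ∨ a ∈ V ∨ a ∈ N := by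
  by_cases ha : a ∈ W ∪ M
  · rcases mem_union.mp ha with ha | ha <;> simp [ha]
  · rcases mem_union.mp (h.compl_union₁₂ ▸ mem_compl.mpr ha) with ha | ha <;> simp [ha]

theorem compl_union₂₃ : (M ∪ V)ᶜ = W ∪ N := by
  have := h.mem_or
  have := h.disjoint₁₂; have := h.disjoint₁₃; have := h.disjoint₁₄
  have := h.disjoint₂₃; have := h.disjoint₂₄; have := h.disjoint₃₄
  ext a
  grind [disjoint_left, mem_compl]

theorem union₂₃_notMem : M ∪ V ∉ T.sides := by
  obtain ⟨w, hw⟩ := nonempty_of_mem h.mem₁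
  obtain ⟨m, hm⟩ := nonempty_of_mem h.mem₂
  obtain ⟨v, hv⟩ := nonempty_of_mem h.mem₃
  obtain ⟨x, hx⟩ := nonempty_of_mem h.mem₄
  have h₁₂ : ∀ a ∈ V ∪ N, a ∉ W ∪ M := fun a ha => mem_compl.mp (h.compl_union₁₂ ▸ ha)
  have h₂₃ : ∀ a ∈ W ∪ N, a ∉ M ∪ V := fun a ha => mem_compl.mp (h.compl_union₂₃ ▸ ha)
  exact fun hMV => (T.compatible _ hMV _ h.union₁₂_mem).four_point
    (mem_union_left _ hm) (mem_union_right _ hm) (mem_union_right _ hv)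
    (h₁₂ v (mem_union_left _ hv)) (h₂₃ w (mem_union_left _ hw)) (mem_union_left _ hw)
    (h₂₃ x (mem_union_right _ hx)) (h₁₂ x (mem_union_right _ hx))

theorem nniSides_swap : T.nniSides V N W = T.nniSides W M V := by
  rw [nniSides, nniSides, ← h.compl_union₁₂, compl_compl, union_comm N W, ← h.compl_union₂₃,
    compl_compl, pair_comm, pair_comm (M ∪ V)]

theorem nniSides_flip : T.nniSides M W N = T.nniSides W M V := by
  rw [nniSides, nniSides, union_comm M W, ← h.compl_union₂₃, compl_compl, pair_comm (M ∪ V)]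

theorem eq_of_subset (hB : B ∈ T.sides) (hWB : W ⊆ B) (hVB : Disjoint V B) :
    B = W ∨ B = W ∪ M ∨ B = Vᶜ := by
  obtain ⟨w, hw⟩ := nonempty_of_mem h.mem₁
  obtain ⟨v, hv⟩ := nonempty_of_mem h.mem₃
  have hvB := disjoint_left.mp hVB hv
  have hM := (T.compatible B hB M h.mem₂).disjoint_or_subset (hWB hw)
    (disjoint_left.mp h.disjoint₁₂ hw) hvB (disjoint_right.mp h.disjoint₂₃ hv)
  have hN := (T.compatible B hB N h.mem₄).disjoint_or_subset (hWB hw)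
    (disjoint_left.mp h.disjoint₁₄ hw) hvB (disjoint_left.mp h.disjoint₃₄ hv)
  have := h.mem_or
  have := h.disjoint₁₂; have := h.disjoint₁₃; have := h.disjoint₁₄
  have := h.disjoint₂₃; have := h.disjoint₂₄; have := h.disjoint₃₄
  rcases hM with hM | hM <;> rcases hN with hN | hN
  · left
    ext a
    grind [disjoint_left]
  · refine absurd ?_ h.union₂₃_notMem
    rw [← compl_mem_iff, h.compl_union₂₃, show W ∪ N = B by ext a; grind [disjoint_left]]
    exact hB
  · right; left
    ext a
    grind [disjoint_left]
  · right; right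
    ext a
    grind [disjoint_left, mem_compl]

theorem swapSide_mem (hB : B ∈ T.sides) (hE : B ≠ W ∪ M) (hEc : B ≠ (W ∪ M)ᶜ) :
    swapSide W V B ∈ T.sides := by
  refine swapSide_mem_sides h.mem₁ h.mem₃ h.disjoint₁₃ hB (fun h₁ h₂ => ?_) (fun h₁ h₂ => ?_)
  · exact (h.eq_of_subset hB h₁ h₂).imp_right (Or.resolve_left · hE)
  · exact (h.eq_of_subset (T.compl_mem B hB) h₁ h₂).imp_right
      (Or.resolve_left · fun e => hEc (by rw [← e, compl_compl]))

theorem swapSide_union₁₂ : swapSide W V (W ∪ M) = M ∪ V := by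
  rw [swapSide_of_subset ⟨subset_union_left, (h.disjoint_union.mono_right subset_union_left).symm⟩,
    union_sdiff_cancel_left h.disjoint₁₂]

theorem image_swapSide : T.sides.image (swapSide W V) = T.nniSides W M V := by
  have hW := nonempty_of_mem h.mem₁
  have hV := nonempty_of_mem h.mem₃
  have hE := h.swapSide_union₁₂
  have hEc : swapSide W V (W ∪ M)ᶜ = (M ∪ V)ᶜ := by
    rw [swapSide_compl hW hV h.disjoint₁₃, hE]
  ext D
  rw [mem_image_swapSide hW hV h.disjoint₁₃, nniSides]
  simp only [mem_union, mem_sdiff, mem_insert, mem_singleton, not_or]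
  constructor
  · intro hD
    by_cases hDE : swapSide W V D = W ∪ M
    · exact .inr (.inl (by rw [← swapSide_swapSide hW hV h.disjoint₁₃ D, hDE, hE]))
    by_cases hDEc : swapSide W V D = (W ∪ M)ᶜ
    · exact .inr (.inr (by rw [← swapSide_swapSide hW hV h.disjoint₁₃ D, hDEc, hEc]))
    refine .inl ⟨swapSide_swapSide hW hV h.disjoint₁₃ D ▸ h.swapSide_mem hD hDE hDEc, ?_, ?_⟩
    · rintro rfl
      exact h.union₂₃_notMem (hE ▸ hD)
    · rintro rfl
      exact h.union₂₃_notMem (compl_mem_iff.mp (hEc ▸ hD))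
  · rintro (⟨hD, hDE, hDEc⟩ | rfl | rfl)
    · exact h.swapSide_mem hD hDE hDEc
    · rw [← hE, swapSide_swapSide hW hV h.disjoint₁₃]
      exact h.union₁₂_mem
    · rw [← hEc, swapSide_swapSide hW hV h.disjoint₁₃]
      exact T.compl_mem _ h.union₁₂_mem

theorem mem₂_nniSides : M ∈ T.nniSides W M V := by
  obtain ⟨w, hw⟩ := nonempty_of_mem h.mem₁
  obtain ⟨m, hm⟩ := nonempty_of_mem h.mem₂
  exact mem_nniSides h.mem₂
    (ne_of_mem_of_not_mem' (mem_union_left M hw) (disjoint_left.mp h.disjoint₁₂ hw)).symm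
    (ne_of_mem_of_not_mem' hm (by simp [hm]))

theorem restrict_eq (hT' : T'.sides = T.nniSides W M V) (hS : Disjoint W S) :
    T.restrict S = T'.restrict S := by
  -- off `W`, the exchanged splits look like the pendant splits of `M` and of `N`
  have trace : ∀ A, (W ∪ A) ∩ S = A ∩ S ∧ (W ∪ A)ᶜ ∩ S = Aᶜ ∩ S := fun A => by
    constructor <;> ext a <;> grind [disjoint_left, mem_compl]
  have hM : M ∈ T'.sides := hT' ▸ h.mem₂_nniSides
  unfold restrict
  ext C
  simp only [mem_image]
  constructor
  · rintro ⟨B, hB, rfl⟩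
    by_cases hBE : B = W ∪ M
    · exact ⟨M, hM, hBE ▸ (trace M).1.symm⟩
    by_cases hBEc : B = (W ∪ M)ᶜ
    · exact ⟨Mᶜ, T'.compl_mem M hM, hBEc ▸ (trace M).2.symm⟩
    exact ⟨B, hT' ▸ mem_nniSides hB hBE hBEc, rfl⟩
  · rintro ⟨B, hB, rfl⟩
    rw [hT', nniSides, ← compl_compl (M ∪ V), h.compl_union₂₃, compl_compl] at hB
    simp only [mem_union, mem_sdiff, mem_insert, mem_singleton] at hB
    rcases hB with ⟨hB, -⟩ | rfl | rfl
    · exact ⟨B, hB, rfl⟩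
    · exact ⟨Nᶜ, T.compl_mem N h.mem₄, (trace N).2.symm⟩
    · exact ⟨N, h.mem₄, (trace N).1.symm⟩

theorem mem_ONNI (hT' : T'.sides = T.nniSides W M V) : (Sym2.mk W Wᶜ, T') ∈ T.ONNI := by
  obtain ⟨x, hx⟩ := nonempty_of_mem h.mem₄
  have hT'flip : T'.sides = T.nniSides M W N := hT'.trans h.nniSides_flip.symm
  have hne : T' ≠ T := fun e =>
    h.union₂₃_notMem (e ▸ hT' ▸ mem_union_right _ (mem_insert_self _ _))
  refine ⟨⟨hne, W, rfl, h.mem₁, hT'flip ▸ h.flip.mem₂_nniSides,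
      h.flip.restrict_eq hT'flip h.disjoint₁₂.symm, h.restrict_eq hT' disjoint_compl_right⟩,
    W, V, rfl, ⟨x, mem_compl.mpr (disjoint_right.mp h.disjoint₁₄ hx), h.flip.restrict_eq hT'flip
      (disjoint_insert_right.mpr ⟨disjoint_right.mp h.disjoint₂₄ hx, h.disjoint₁₂.symm⟩)⟩,
    h.mem₃, (h.disjoint₁₃.ne (nonempty_of_mem h.mem₁).ne_empty).symm, h.disjoint₁₃,
    hT'.trans h.image_swapSide.symm⟩

end IsQuartet

section OfSwapSide

variable (hW : W ∈ T.sides) (hV : V ∈ T.sides) (hWV : Disjoint W V)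
  (hT' : T'.sides = T.sides.image (swapSide W V))
include hW hV hWV hT'

theorem exists_ssubset_ssubset_of_swapSide (hne : T' ≠ T) :
    ∃ E ∈ T.sides, W ⊂ E ∧ E ⊂ Vᶜ := by
  by_contra! hno
  have between : ∀ C ∈ T.sides, W ⊆ C → Disjoint V C → C = W ∨ C = Vᶜ := by
    intro C hC hWC hVC
    by_contra! hC'
    exact hno C hC (hWC.ssubset_of_ne hC'.1.symm)
      ((subset_compl_iff_disjoint_left.mpr hVC).ssubset_of_ne hC'.2)
  have key : ∀ B ∈ T.sides, swapSide W V B ∈ T.sides := fun B hB =>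
    swapSide_mem_sides hW hV hWV hB (between B hB) (between Bᶜ (T.compl_mem B hB))
  have hW' := nonempty_of_mem hW
  have hV' := nonempty_of_mem hV
  refine hne (sides_injective (hT'.trans (ext fun B => ?_)))
  rw [mem_image_swapSide hW' hV' hWV]
  exact ⟨fun h => swapSide_swapSide hW' hV' hWV B ▸ key _ h, key B⟩

theorem not_ssubset_of_swapSide (hWT' : W ∈ T'.sides) (hres : T.restrict Wᶜ = T'.restrict Wᶜ)
    (hE₁ : E₁ ∈ T.sides) (hE₂ : E₂ ∈ T.sides) (h₁ : W ⊂ E₁) (h₃ : E₂ ⊂ Vᶜ) : ¬E₁ ⊂ E₂ := by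
  intro h₂
  obtain ⟨w, hw⟩ := nonempty_of_mem hW
  obtain ⟨v, hv⟩ := nonempty_of_mem hV
  obtain ⟨e₁, he₁, he₁'⟩ := exists_of_ssubset h₁
  obtain ⟨e₂, he₂, he₂'⟩ := exists_of_ssubset h₂
  obtain ⟨e₃, he₃, he₃'⟩ := exists_of_ssubset h₃
  have hvE₂ : v ∉ E₂ := fun h => mem_compl.mp (h₃.1 h) hv
  have he₃E₁ : e₃ ∉ E₁ := fun h => he₃' (h₂.1 h)
  have hmem : ∀ C, C ∈ T'.sides → swapSide W V C ∈ T.sides := fun C hC => by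
    rwa [hT', mem_image_swapSide (nonempty_of_mem hW) (nonempty_of_mem hV) hWV] at hC
  -- the side of `T'` with the same trace on `Wᶜ` as `E₂` gives a side of `T` crossing `E₁`
  obtain ⟨B, hB, hBE⟩ : ∃ B ∈ T'.sides, B ∩ Wᶜ = E₂ ∩ Wᶜ := by
    have : E₂ ∩ Wᶜ ∈ T'.restrict Wᶜ := hres ▸ mem_image_of_mem _ hE₂
    simpa [restrict] using this
  rcases eq_or_eq_sdiff_of_inter_compl_eq hWT' hB (h₁.1.trans h₂.1) hBE he₂
    (fun h => he₂' (h₁.1 h)) hvE₂ (disjoint_right.mp hWV hv) with rfl | rfl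
  · have hX := hmem _ hB
    rw [swapSide_of_subset ⟨h₁.1.trans h₂.1, disjoint_left.mpr fun _ hx hx' =>
      mem_compl.mp (h₃.1 hx') hx⟩] at hX
    exact (T.compatible _ hX E₁ hE₁).four_point (a := e₁) (b := v) (c := w)
      (by simp [he₁', h₂.1 he₁]) he₁ (by simp [hv]) (fun h => hvE₂ (h₂.1 h))
      (by simp [hw, disjoint_left.mp hWV hw]) (h₁.1 hw) (by simp [he₃', mem_compl.mp he₃]) he₃E₁
  · have hX := hmem _ hB
    rw [swapSide_of_not_subset (fun h => (mem_sdiff.mp (h.1 hw)).2 hw)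
      (fun h => hvE₂ (mem_sdiff.mp (h.1 hv)).1)] at hX
    exact (T.compatible _ hX E₁ hE₁).four_point (a := e₁) (b := e₂) (c := w)
      (by simp [he₁', h₂.1 he₁]) he₁ (mem_sdiff.mpr ⟨he₂, fun h => he₂' (h₁.1 h)⟩) he₂'
      (by simp [hw]) (h₁.1 hw) (by simp [he₃']) he₃E₁

theorem exists_isQuartet_of_swapSide (hne : T' ≠ T) (hWT' : W ∈ T'.sides)
    (hres : T.restrict Wᶜ = T'.restrict Wᶜ) : ∃ M N, IsQuartet T W M V N := by
  obtain ⟨E, hE, hWE, hEV⟩ := exists_ssubset_ssubset_of_swapSide hW hV hWV hT' hne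
  obtain ⟨w, hw⟩ := nonempty_of_mem hW
  obtain ⟨v, hv⟩ := nonempty_of_mem hV
  have hVE : V ⊆ Eᶜ := le_compl_comm.mp hEV.1
  have hchain : ∀ B ∈ T.sides, W ⊆ B → B ⊆ Vᶜ → B = W ∨ B = E ∨ B = Vᶜ := by
    intro B hB hWB hBV
    by_contra! hB'
    rcases (T.compatible B hB E hE).subset_or_subset (hWB hw) (hWE.1 hw)
      (fun h => mem_compl.mp (hBV h) hv) (fun h => mem_compl.mp (hEV.1 h) hv) with hBE | hEB
    · exact not_ssubset_of_swapSide hW hV hWV hT' hWT' hres hB hE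
        (hWB.ssubset_of_ne hB'.1.symm) hEV (hBE.ssubset_of_ne hB'.2.1)
    · exact not_ssubset_of_swapSide hW hV hWV hT' hWT' hres hE hB hWE
        (hBV.ssubset_of_ne hB'.2.2) (hEB.ssubset_of_ne (Ne.symm hB'.2.1))
  have hM : E \ W ∈ T.sides := sdiff_mem_of_covBy hW hE hWE fun B hB hWB hBE =>
    (hchain B hB hWB (hBE.trans hEV.1)).imp_right fun h =>
      h.resolve_right fun h' => hEV.ne (hEV.1.antisymm (by rwa [← h']))
  have hN : Eᶜ \ V ∈ T.sides := by
    refine sdiff_mem_of_covBy hV (T.compl_mem E hE) (hVE.ssubset_of_ne fun h => ?_)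
      fun B hB hVB hBE => ?_
    · exact hEV.ne (by rw [h, compl_compl])
    · rcases hchain Bᶜ (T.compl_mem B hB) (hWE.1.trans (le_compl_comm.mp hBE))
        (compl_le_compl hVB) with h | h | h
      · exact absurd (h ▸ le_compl_comm.mp hBE) hWE.2
      · exact .inr (eq_compl_comm.mpr h.symm)
      · exact .inl (compl_injective h)
  exact ⟨E \ W, Eᶜ \ V, hW, hM, hV, hN, by rwa [union_sdiff_of_subset hWE.1],
    by rw [union_sdiff_of_subset hWE.1, union_sdiff_of_subset hVE], disjoint_sdiff, disjoint_sdiff⟩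

end OfSwapSide

theorem exists_isQuartet_of_mem_ONNI {θ : Move n} (hθ : θ ∈ T.ONNI) :
    ∃ W M V N, IsQuartet T W M V N ∧ θ.1 = Sym2.mk W Wᶜ ∧ θ.2.sides = T.nniSides W M V := by
  obtain ⟨⟨hne, A, hA, hAT, hAT', hresA, hresAc⟩, W, V, hW, -, hV, -, hWV, hT'⟩ := hθ
  obtain ⟨hWT, hWT', hres⟩ :
      W ∈ T.sides ∧ W ∈ θ.2.sides ∧ T.restrict Wᶜ = θ.2.restrict Wᶜ := by
    rcases Sym2.eq_iff.mp (hA.symm.trans hW) with ⟨rfl, -⟩ | ⟨-, rfl⟩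
    · exact ⟨hAT, hAT', hresAc⟩
    · rw [compl_compl]
      exact ⟨T.compl_mem A hAT, θ.2.compl_mem A hAT', hresA⟩
  obtain ⟨M, N, hQ⟩ := exists_isQuartet_of_swapSide hWT hV hWV hT' hne hWT' hres
  exact ⟨W, M, V, N, hQ, hW, hT'.trans hQ.image_swapSide⟩

theorem move_ne_of_disjoint (hP : P.Nonempty) (hPQ : Disjoint P Q) {a : Fin n} (ha : a ∉ P)
    (ha' : a ∉ Q) : ((Sym2.mk P Pᶜ, T') : Move n) ≠ (Sym2.mk Q Qᶜ, T') := by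
  intro e
  rcases Sym2.eq_iff.mp (congrArg Prod.fst e) with ⟨rfl, -⟩ | ⟨rfl, -⟩
  · exact hPQ.ne hP.ne_empty rfl
  · exact ha (mem_compl.mpr ha')

namespace IsQuartet

variable (h : IsQuartet T W M V N)
include h

theorem union₁₂_eq_of_nniSides_eq (h' : IsQuartet T W' M' V' N')
    (heq : T.nniSides W' M' V' = T.nniSides W M V) : W' ∪ M' = W ∪ M ∨ W' ∪ M' = V ∪ N := by
  rw [← h.compl_union₁₂]
  by_contra! hne
  have hE' := mem_nniSides (V := V) h'.union₁₂_mem hne.1 hne.2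
  rw [← heq, nniSides] at hE'
  simp only [mem_union, mem_sdiff, mem_insert_self, not_true_eq_false, and_false, false_or,
    mem_insert, mem_singleton] at hE'
  rcases hE' with hE' | hE'
  · exact h'.union₂₃_notMem (hE' ▸ h'.union₁₂_mem)
  · exact h'.union₂₃_notMem (compl_mem_iff.mp (hE' ▸ h'.union₁₂_mem))

theorem eq_of_nniSides_eq (h' : IsQuartet T W' M' V' N')
    (heq : T.nniSides W' M' V' = T.nniSides W M V) : W' = W ∨ W' = M ∨ W' = V ∨ W' = N := by
  rcases h.union₁₂_eq_of_nniSides_eq h' heq with hE | hE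
  · exact (eq_or_eq_of_union_eq h.mem₁ h.mem₂ h'.mem₁ h'.mem₂ h.disjoint₁₂ h'.disjoint₁₂ hE
      (ne_univ_of_mem h.union₁₂_mem)).imp_right .inl
  · exact .inr (.inr (eq_or_eq_of_union_eq h.mem₃ h.mem₄ h'.mem₁ h'.mem₂ h.disjoint₃₄
      h'.disjoint₁₂ hE (ne_univ_of_mem h.swap.union₁₂_mem)))

theorem setOf_ONNI_eq (hT' : T'.sides = T.nniSides W M V) :
    {θ ∈ T.ONNI | θ.2 = T'} =
      {(Sym2.mk W Wᶜ, T'), (Sym2.mk M Mᶜ, T'), (Sym2.mk V Vᶜ, T'), (Sym2.mk N Nᶜ, T')} := by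
  ext ⟨σ, T''⟩
  simp only [Set.mem_sep_iff, Set.mem_insert_iff, Set.mem_singleton_iff, Prod.mk.injEq]
  constructor
  · rintro ⟨hθ, rfl⟩
    obtain ⟨W', M', V', N', h', rfl, hT''⟩ := exists_isQuartet_of_mem_ONNI hθ
    rcases h.eq_of_nniSides_eq h' (hT''.symm.trans hT') with rfl | rfl | rfl | rfl <;> simp
  · rintro (⟨rfl, rfl⟩ | ⟨rfl, rfl⟩ | ⟨rfl, rfl⟩ | ⟨rfl, rfl⟩)
    · exact ⟨h.mem_ONNI hT', rfl⟩
    · exact ⟨h.flip.mem_ONNI (hT'.trans h.nniSides_flip.symm), rfl⟩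
    · exact ⟨h.swap.mem_ONNI (hT'.trans h.nniSides_swap.symm), rfl⟩
    · exact ⟨h.flip.swap.mem_ONNI
        (hT'.trans (h.flip.nniSides_swap.trans h.nniSides_flip).symm), rfl⟩

theorem ncard_setOf_ONNI (hT' : T'.sides = T.nniSides W M V) :
    {θ ∈ T.ONNI | θ.2 = T'}.ncard = 4 := by
  obtain ⟨w, hw⟩ := nonempty_of_mem h.mem₁
  obtain ⟨m, hm⟩ := nonempty_of_mem h.mem₂
  obtain ⟨v, hv⟩ := nonempty_of_mem h.mem₃
  rw [h.setOf_ONNI_eq hT', Set.ncard_eq_four]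
  exact ⟨_, _, _, _,
    move_ne_of_disjoint ⟨w, hw⟩ h.disjoint₁₂ (disjoint_right.mp h.disjoint₁₃ hv)
      (disjoint_right.mp h.disjoint₂₃ hv),
    move_ne_of_disjoint ⟨w, hw⟩ h.disjoint₁₃ (disjoint_right.mp h.disjoint₁₂ hm)
      (disjoint_left.mp h.disjoint₂₃ hm),
    move_ne_of_disjoint ⟨w, hw⟩ h.disjoint₁₄ (disjoint_right.mp h.disjoint₁₂ hm)
      (disjoint_left.mp h.disjoint₂₄ hm),
    move_ne_of_disjoint ⟨m, hm⟩ h.disjoint₂₃ (disjoint_left.mp h.disjoint₁₂ hw)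
      (disjoint_left.mp h.disjoint₁₃ hw),
    move_ne_of_disjoint ⟨m, hm⟩ h.disjoint₂₄ (disjoint_left.mp h.disjoint₁₂ hw)
      (disjoint_left.mp h.disjoint₁₄ hw),
    move_ne_of_disjoint ⟨v, hv⟩ h.disjoint₃₄ (disjoint_left.mp h.disjoint₁₃ hw)
      (disjoint_left.mp h.disjoint₁₄ hw), rfl⟩

end IsQuartet

end PhyloTree

theorem nni_four_redundant_ops_general (n : ℕ)
    (T : PhyloTree n) (θ : PhyloTree.Move n) (hθ : θ ∈ T.ONNI) :
    {θ' ∈ T.ONNI | θ'.2 = θ.2}.ncard = 4 := by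
  obtain ⟨W, M, V, N, h, -, hθ₂⟩ := PhyloTree.exists_isQuartet_of_mem_ONNI hθ
  exact h.ncard_setOf_ONNI hθ₂

/-- if `θ` is an NNI operation on `T ∈ 𝒯_n` (`n ≥ 4`), then
there are precisely four distinct `θ' ∈ O_NNI(T)` with `θ'(T) = θ(T)`. -/
theorem nni_four_redundant_ops (n : ℕ) (hn : 4 ≤ n)
    (T : PhyloTree n) (θ : PhyloTree.Move n) (hθ : θ ∈ T.ONNI) :
    {θ' ∈ T.ONNI | θ'.2 = θ.2}.ncard = 4 :=
  nni_four_redundant_ops_general n T θ hθ
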